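/- Let A = K[x,y,z] be ℤ-graded with deg x = a, deg y = b, deg z = -c where a,b,c > 0, and let E = {φ graded automorphism : φ(z) = z} and T = {φ_λ : λ ∈ K*} where φ_λ fixes x,y and sends z to λz. Then E is a normal subgroup of the group of graded automorphisms, T is a subgroup, E ∩ T = {id}, and every graded automorphism is a product of an element of E and an element of T (so Aut_Γ(A) ≅ E ⋊ T). -/

import Mathlib

/-!
An automorphism that preserves every weighted homogeneous component commutes with the
projections onto them, so its inverse preserves them too and graded automorphisms form a group.
Since `z` is the only variable of negative degree, every polynomial of degree `-c` is divisible
by `z`; applied to `φ` and `φ⁻¹` this makes `φ z` associated to `z`, i.e. `φ z = λ z` with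
`λ ∈ Kˣ`. Hence conjugation by a graded automorphism only rescales `z` and `E` is normal, and
`φ = (φ ∘ φ_λ⁻¹) ∘ φ_λ` is the factorisation. `T` is the image of `λ ↦ φ_λ`, which meets `E`
only in `φ_1 = id`.
-/

open MvPolynomial

variable {K : Type*}

/-- `p` is homogeneous of degree `d` for the ℤ-grading of `K[x,y,z]` with
`deg x = a, deg y = b, deg z = -c`. -/
def IsWtHom [CommRing K] (a b c : ℕ) (p : MvPolynomial (Fin 3) K) (d : ℤ) : Prop :=
  ∀ m ∈ p.support, (a : ℤ) * (m 0 : ℤ) + (b : ℤ) * (m 1 : ℤ) - (c : ℤ) * (m 2 : ℤ) = d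

/-- `φ` is a graded automorphism: it maps each homogeneous component into itself. -/
def IsGradedAut [CommRing K] (a b c : ℕ)
    (φ : MvPolynomial (Fin 3) K ≃ₐ[K] MvPolynomial (Fin 3) K) : Prop :=
  ∀ (d : ℤ) (p : MvPolynomial (Fin 3) K), IsWtHom a b c p d → IsWtHom a b c (φ p) d

namespace MvPolynomial

section WeightedGraded

variable {R σ M : Type*} [CommSemiring R] [AddCommMonoid M] {w : σ → M}

theorem weightedHomogeneousComponent_map (f : MvPolynomial σ R →ₗ[R] MvPolynomial σ R)
    (hf : ∀ m p, IsWeightedHomogeneous w p m → IsWeightedHomogeneous w (f p) m)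
    (m : M) (p : MvPolynomial σ R) :
    weightedHomogeneousComponent w m (f p) = f (weightedHomogeneousComponent w m p) := by
  classical
  induction p using MvPolynomial.induction_on' with
  | monomial d r =>
    have hd := isWeightedHomogeneous_monomial w d r rfl
    rw [weightedHomogeneousComponent_of_mem (hf _ _ hd), weightedHomogeneousComponent_of_mem hd]
    split_ifs <;> simp
  | add p q hp hq => simp only [map_add, hp, hq]

variable (R w) in
def weightedGradedAut : Subgroup (MvPolynomial σ R ≃ₐ[R] MvPolynomial σ R) where
  carrier := {φ | ∀ m p, IsWeightedHomogeneous w p m → IsWeightedHomogeneous w (φ p) m}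
  one_mem' _ _ hp := hp
  mul_mem' hφ hψ m p hp := hφ m _ (hψ m p hp)
  inv_mem' {φ} hφ m p hp := by
    have : φ (weightedHomogeneousComponent w m (φ⁻¹ p)) = φ (φ⁻¹ p) := by
      simpa [weightedHomogeneousComponent_eq_self hp] using
        (weightedHomogeneousComponent_map φ.toLinearMap hφ m (φ⁻¹ p)).symm
    rw [← φ.injective this]
    exact weightedHomogeneousComponent_isWeightedHomogeneous m _

theorem mem_weightedGradedAut {φ : MvPolynomial σ R ≃ₐ[R] MvPolynomial σ R} :
    φ ∈ weightedGradedAut R w ↔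
      ∀ m p, IsWeightedHomogeneous w p m → IsWeightedHomogeneous w (φ p) m :=
  Iff.rfl

theorem algEquiv_ext {φ ψ : MvPolynomial σ R ≃ₐ[R] MvPolynomial σ R}
    (h : ∀ i, φ (X i) = ψ (X i)) : φ = ψ :=
  AlgEquiv.coe_toAlgHom_injective (algHom_ext h)

@[simp]
theorem algEquiv_C (φ : MvPolynomial σ R ≃ₐ[R] MvPolynomial σ R) (r : R) : φ (C r) = C r :=
  φ.commutes r

end WeightedGraded

section NegativeWeight

variable {R σ : Type*} {w : σ → ℤ} {i : σ}

theorem X_dvd_of_isWeightedHomogeneous_of_neg [CommSemiring R] (hw : ∀ j ≠ i, 0 ≤ w j)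
    {p : MvPolynomial σ R} {d : ℤ} (hd : d < 0) (hp : IsWeightedHomogeneous w p d) :
    X i ∣ p := by
  classical
  rw [p.as_sum]
  refine Finset.dvd_sum fun m hm => X_dvd_monomial.mpr (Or.inr fun hmi => ?_)
  have : 0 ≤ Finsupp.weight w m := by
    rw [Finsupp.weight_apply]
    refine Finset.sum_nonneg fun j hj => smul_nonneg (Nat.zero_le _) (hw j ?_)
    rintro rfl
    exact Finsupp.mem_support_iff.mp hj hmi
  exact absurd (hp (mem_support_iff.mp hm)) (by omega)

theorem exists_map_X_eq_C_mul [CommRing R] [IsDomain R] (hw : ∀ j ≠ i, 0 ≤ w j) (hwi : w i < 0)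
    {φ : MvPolynomial σ R ≃ₐ[R] MvPolynomial σ R} (hφ : φ ∈ weightedGradedAut R w) :
    ∃ r : Rˣ, φ (X i) = C (r : R) * X i := by
  have hX := isWeightedHomogeneous_X R w i
  have h₁ : X i ∣ φ (X i) := X_dvd_of_isWeightedHomogeneous_of_neg hw hwi (hφ _ _ hX)
  have h₂ : φ (X i) ∣ X i := by
    simpa using map_dvd φ
      (X_dvd_of_isWeightedHomogeneous_of_neg hw hwi (inv_mem hφ _ _ hX))
  obtain ⟨u, hu⟩ := associated_of_dvd_dvd h₁ h₂
  obtain ⟨r, hr, hur⟩ := isUnit_iff_eq_C_of_isReduced.mp u.isUnit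
  exact ⟨hr.unit, by rw [← hu, hur, mul_comm, IsUnit.unit_spec]⟩

end NegativeWeight

end MvPolynomial

section Grading

variable {a b c : ℕ}

theorem weight_fin_three (m : Fin 3 →₀ ℕ) :
    Finsupp.weight ![(a : ℤ), b, -c] m = a * m 0 + b * m 1 - c * m 2 := by
  simp [Finsupp.weight_apply, Finsupp.sum_fintype, Fin.sum_univ_three, sub_eq_add_neg, mul_comm]

theorem isWtHom_iff_isWeightedHomogeneous [CommRing K] {p : MvPolynomial (Fin 3) K} {d : ℤ} :
    IsWtHom a b c p d ↔ IsWeightedHomogeneous ![(a : ℤ), b, -c] p d := by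
  simp only [IsWtHom, IsWeightedHomogeneous, weight_fin_three, mem_support_iff]

theorem isGradedAut_iff_mem_weightedGradedAut [CommRing K]
    {φ : MvPolynomial (Fin 3) K ≃ₐ[K] MvPolynomial (Fin 3) K} :
    IsGradedAut a b c φ ↔ φ ∈ weightedGradedAut K ![(a : ℤ), b, -c] := by
  simp only [IsGradedAut, isWtHom_iff_isWeightedHomogeneous, mem_weightedGradedAut]

variable [Field K]

theorem exists_map_X_two_eq (hc : 0 < c)
    {φ : MvPolynomial (Fin 3) K ≃ₐ[K] MvPolynomial (Fin 3) K} (hφ : IsGradedAut a b c φ) :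
    ∃ l : Kˣ, φ (X 2) = C (l : K) * X 2 :=
  exists_map_X_eq_C_mul (fun j hj => by fin_cases j <;> simp_all) (by simpa using hc)
    (isGradedAut_iff_mem_weightedGradedAut.mp hφ)

variable (K) in
noncomputable def scaleZ : Kˣ →* (MvPolynomial (Fin 3) K ≃ₐ[K] MvPolynomial (Fin 3) K) where
  toFun l := AlgEquiv.ofAlgHom (aeval ![X 0, X 1, C (l : K) * X 2])
    (aeval ![X 0, X 1, C ((l⁻¹ : Kˣ) : K) * X 2])
    (algHom_ext fun i => by fin_cases i <;> simp [← mul_assoc, ← C_mul])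
    (algHom_ext fun i => by fin_cases i <;> simp [← mul_assoc, ← C_mul])
  map_one' := algEquiv_ext fun i => by fin_cases i <;> simp
  map_mul' l l' := algEquiv_ext fun i => by
    fin_cases i <;> simp [AlgEquiv.mul_apply, mul_left_comm, mul_assoc]

theorem scaleZ_apply (l : Kˣ) (p : MvPolynomial (Fin 3) K) :
    scaleZ K l p = aeval ![X 0, X 1, C (l : K) * X 2] p :=
  rfl

theorem scaleZ_monomial (l : Kˣ) (m : Fin 3 →₀ ℕ) (r : K) :
    scaleZ K l (monomial m r) = monomial m ((l : K) ^ m 2 * r) := by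
  simp [scaleZ_apply, monomial_eq, Finsupp.prod_fintype, Fin.prod_univ_three, mul_pow, mul_comm,
    mul_left_comm, mul_assoc]

theorem scaleZ_mem_weightedGradedAut {M : Type*} [AddCommMonoid M] (w : Fin 3 → M) (l : Kˣ) :
    scaleZ K l ∈ weightedGradedAut K w := by
  intro m p hp
  induction hp using IsWeightedHomogeneous.induction_on with
  | zero => simpa using isWeightedHomogeneous_zero K w m
  | add p q _ _ hp hq => simpa using hp.add hq
  | monomial d r hr => rw [scaleZ_monomial]; exact isWeightedHomogeneous_monomial w d _ hr

theorem mem_range_scaleZ_iff {φ : MvPolynomial (Fin 3) K ≃ₐ[K] MvPolynomial (Fin 3) K} :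
    φ ∈ (scaleZ K).range ↔
      ∃ l : K, l ≠ 0 ∧ φ (X 0) = X 0 ∧ φ (X 1) = X 1 ∧ φ (X 2) = C l * X 2 := by
  constructor
  · rintro ⟨l, rfl⟩
    exact ⟨l, l.ne_zero, by simp [scaleZ_apply]⟩
  · rintro ⟨l, hl, h₀, h₁, h₂⟩
    exact ⟨Units.mk0 l hl, algEquiv_ext fun i => by fin_cases i <;> simp [scaleZ_apply, *]⟩

variable (K a b c) in
noncomputable def gradedAutFixingZ :
    Subgroup (MvPolynomial (Fin 3) K ≃ₐ[K] MvPolynomial (Fin 3) K) :=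
  weightedGradedAut K ![(a : ℤ), b, -c] ⊓ MulAction.stabilizer _ (X 2 : MvPolynomial (Fin 3) K)

theorem mem_gradedAutFixingZ_iff {φ : MvPolynomial (Fin 3) K ≃ₐ[K] MvPolynomial (Fin 3) K} :
    φ ∈ gradedAutFixingZ K a b c ↔ IsGradedAut a b c φ ∧ φ (X 2) = X 2 := by
  rw [gradedAutFixingZ, Subgroup.mem_inf, isGradedAut_iff_mem_weightedGradedAut,
    MulAction.mem_stabilizer_iff, AlgEquiv.smul_def]

theorem conj_mem_gradedAutFixingZ (hc : 0 < c)
    {ψ φ : MvPolynomial (Fin 3) K ≃ₐ[K] MvPolynomial (Fin 3) K} (hψ : IsGradedAut a b c ψ)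
    (hφ : φ ∈ gradedAutFixingZ K a b c) : ψ * φ * ψ⁻¹ ∈ gradedAutFixingZ K a b c := by
  rw [mem_gradedAutFixingZ_iff, isGradedAut_iff_mem_weightedGradedAut] at *
  obtain ⟨l, hl⟩ :=
    exists_map_X_two_eq hc (isGradedAut_iff_mem_weightedGradedAut.mpr (inv_mem hψ))
  refine ⟨mul_mem (mul_mem hψ hφ.1) (inv_mem hψ), ?_⟩
  have : φ (ψ⁻¹ (X 2)) = ψ⁻¹ (X 2) := by
    rw [hl, map_mul, algEquiv_C, hφ.2]
  rw [AlgEquiv.mul_apply, AlgEquiv.mul_apply, this, ← AlgEquiv.mul_apply, mul_inv_cancel,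
    AlgEquiv.one_apply]

theorem gradedAutFixingZ_inf_range_scaleZ :
    gradedAutFixingZ K a b c ⊓ (scaleZ K).range = ⊥ := by
  rw [eq_bot_iff]
  rintro φ ⟨hφ, l, rfl⟩
  obtain ⟨-, h⟩ := mem_gradedAutFixingZ_iff.mp hφ
  have : C (l : K) = (C 1 : MvPolynomial (Fin 3) K) := by simpa [scaleZ_apply] using h
  rw [Subgroup.mem_bot, show l = 1 from Units.ext (C_injective _ _ this), map_one]

theorem exists_mem_gradedAutFixingZ_mul_mem_range_scaleZ (hc : 0 < c)
    {φ : MvPolynomial (Fin 3) K ≃ₐ[K] MvPolynomial (Fin 3) K} (hφ : IsGradedAut a b c φ) :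
    ∃ e ∈ gradedAutFixingZ K a b c, ∃ t ∈ (scaleZ K).range, φ = e * t := by
  obtain ⟨l, hl⟩ := exists_map_X_two_eq hc hφ
  refine ⟨φ * (scaleZ K l)⁻¹, mem_gradedAutFixingZ_iff.mpr ⟨?_, ?_⟩, scaleZ K l, ⟨l, rfl⟩,
    (inv_mul_cancel_right _ _).symm⟩
  · exact isGradedAut_iff_mem_weightedGradedAut.mpr <| mul_mem
      (isGradedAut_iff_mem_weightedGradedAut.mp hφ) (inv_mem (scaleZ_mem_weightedGradedAut _ l))
  · rw [← map_inv, AlgEquiv.mul_apply, scaleZ_apply]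
    simp [hl, ← mul_assoc, ← C_mul]

end Grading

theorem graded_aut_semidirect_general [Field K]
    (a b c : ℕ) (hc : 0 < c) :
    let A := MvPolynomial (Fin 3) K
    let E : Set (A ≃ₐ[K] A) := {φ | IsGradedAut a b c φ ∧ φ (X 2) = X 2}
    let T : Set (A ≃ₐ[K] A) :=
      {φ | ∃ l : K, l ≠ 0 ∧ φ (X 0) = X 0 ∧ φ (X 1) = X 1 ∧ φ (X 2) = C l * X 2}
    -- E is a subgroup
    ((1 : A ≃ₐ[K] A) ∈ E) ∧ (∀ φ ψ, φ ∈ E → ψ ∈ E → φ * ψ ∈ E) ∧ (∀ φ, φ ∈ E → φ⁻¹ ∈ E) ∧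
    -- E is normal in the group of graded automorphisms
    (∀ ψ, IsGradedAut a b c ψ → ∀ φ, φ ∈ E → ψ * φ * ψ⁻¹ ∈ E) ∧
    -- T is a subgroup
    ((1 : A ≃ₐ[K] A) ∈ T) ∧ (∀ φ ψ, φ ∈ T → ψ ∈ T → φ * ψ ∈ T) ∧ (∀ φ, φ ∈ T → φ⁻¹ ∈ T) ∧
    -- trivial intersection
    (E ∩ T = {1}) ∧
    -- every graded automorphism factors
    (∀ φ, IsGradedAut a b c φ → ∃ e ∈ E, ∃ t ∈ T, φ = e * t) := by
  intro A E T
  have hE : E = gradedAutFixingZ K a b c := Set.ext fun _ => mem_gradedAutFixingZ_iff.symm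
  have hT : T = (scaleZ K).range := Set.ext fun _ => mem_range_scaleZ_iff.symm
  rw [hE, hT, ← Subgroup.coe_inf, gradedAutFixingZ_inf_range_scaleZ]
  exact ⟨one_mem _, fun _ _ => mul_mem, fun _ => inv_mem,
    fun _ hψ _ => conj_mem_gradedAutFixingZ hc hψ, one_mem _, fun _ _ => mul_mem,
    fun _ => inv_mem, Subgroup.coe_bot,
    fun _ => exists_mem_gradedAutFixingZ_mul_mem_range_scaleZ hc⟩

/-- with `E` the graded automorphisms fixing `z` and
`T = {(x, y, λz) : λ ≠ 0}`, the set `E` is closed under multiplication, inverses and is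
normal inside the graded automorphisms, `T` is a subgroup, `E ∩ T = {1}`, and every
graded automorphism is a product of an element of `E` and an element of `T`;
i.e. `Aut_Γ(A) ≅ E ⋊ T`. -/
theorem graded_aut_semidirect [Field K] [IsAlgClosed K] [CharZero K]
    (a b c : ℕ) (ha : 0 < a) (hb : 0 < b) (hc : 0 < c) :
    let A := MvPolynomial (Fin 3) K
    let E : Set (A ≃ₐ[K] A) := {φ | IsGradedAut a b c φ ∧ φ (X 2) = X 2}
    let T : Set (A ≃ₐ[K] A) :=
      {φ | ∃ l : K, l ≠ 0 ∧ φ (X 0) = X 0 ∧ φ (X 1) = X 1 ∧ φ (X 2) = C l * X 2}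
    -- E is a subgroup
    ((1 : A ≃ₐ[K] A) ∈ E) ∧ (∀ φ ψ, φ ∈ E → ψ ∈ E → φ * ψ ∈ E) ∧ (∀ φ, φ ∈ E → φ⁻¹ ∈ E) ∧
    -- E is normal in the group of graded automorphisms
    (∀ ψ, IsGradedAut a b c ψ → ∀ φ, φ ∈ E → ψ * φ * ψ⁻¹ ∈ E) ∧
    -- T is a subgroup
    ((1 : A ≃ₐ[K] A) ∈ T) ∧ (∀ φ ψ, φ ∈ T → ψ ∈ T → φ * ψ ∈ T) ∧ (∀ φ, φ ∈ T → φ⁻¹ ∈ T) ∧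
    -- trivial intersection
    (E ∩ T = {1}) ∧
    -- every graded automorphism factors
    (∀ φ, IsGradedAut a b c φ → ∃ e ∈ E, ∃ t ∈ T, φ = e * t) :=
  graded_aut_semidirect_general a b c hc
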